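/- arXiv:1402.4147 — 2 statements merged into one kernel-verified Lean document; each statement's English description precedes it below -/
import Mathlib

section
/- Suppose $\mathbf{W}_n^* := \sum_{|v|<n} L(v)\mathbf{C}(v)$ converges in probability to a finite random vector $\mathbf{W}^*$ as $n \to \infty$. Then $\mathbf{W}^*$ satisfies almost surely $\mathbf{W}^* = \sum_{j=1}^N T_j [\mathbf{W}^*]_j + \mathbf{C}$, where $[\mathbf{W}^*]_j$ is the analogous limit for the weighted branching process rooted at the $j$-th child of the root; in particular the distribution of $\mathbf{W}^*$ is a fixed point of the inhomogeneous smoothing transform. -/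
open MeasureTheory ProbabilityTheory Filter

/-- The weight `L(v)` of a vertex of the Ulam–Harris tree in the weighted branching process. -/
noncomputable def wbpWeight {Ω : Type*} (Tv : List ℕ → ℕ → Ω → ℝ) (v : List ℕ) (ω : Ω) : ℝ :=
  ∏ k ∈ Finset.range v.length, Tv (v.take k) (v.getD k 0) ω

/-!
Splitting the tree at the root gives `W*ₙ₊₁ = ∑ⱼ Tⱼ [W*ₙ]ⱼ + C` pointwise. Almost surely every
vertex has finitely many nonzero weights (each `T(v)` has the law of `T`), so the right-hand side
is a finite sum. Countably many sequences converging in probability have a common subsequence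
along which all of them converge almost surely (Borel–Cantelli), and passing to the limit along it
gives the fixed-point equation.
-/

open Function Topology
open scoped ENNReal

theorem measurableSet_setOf_finite_support {M : Type*} [Zero M] [MeasurableSpace M]
    [MeasurableSingletonClass M] : MeasurableSet {g : ℕ → M | (support g).Finite} := by
  have : {g : ℕ → M | (support g).Finite} = liminf (fun j => {g | g j = 0}) atTop := by
    ext g
    rw [mem_liminf_iff_eventually_mem, ← Nat.cofinite_eq_atTop, eventually_cofinite]
    rfl
  rw [this]
  exact MeasurableSet.measurableSet_liminf fun j =>
    measurable_pi_apply j (measurableSet_singleton 0)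

theorem tendsto_tsum_smul_of_finite {ι β R E : Type*} [Semiring R] [AddCommMonoid E] [Module R E]
    [TopologicalSpace E] [ContinuousAdd E] [ContinuousConstSMul R E] {l : Filter ι} {a : β → R}
    (ha : (support a).Finite) {x : ι → β → E} {y : β → E}
    (h : ∀ j, Tendsto (fun k => x k j) l (𝓝 (y j))) :
    Tendsto (fun k => ∑' j, a j • x k j) l (𝓝 (∑' j, a j • y j)) := by
  have hsupp : ∀ z : β → E, support (fun j => a j • z j) ⊆ ha.toFinset := fun z j hj =>
    ha.mem_toFinset.2 fun h0 => hj (by simp [h0])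
  simp only [tsum_eq_sum' (hsupp _)]
  exact tendsto_finsetSum _ fun j _ => (h j).const_smul (a j)

def List.lengthLtSuccEquiv (α : Type*) (n : ℕ) :
    {l : List α // l.length < n + 1} ≃ Option (α × {l : List α // l.length < n}) where
  toFun
    | ⟨[], _⟩ => none
    | ⟨j :: w, h⟩ => some (j, ⟨w, Nat.lt_of_succ_lt_succ h⟩)
  invFun
    | none => ⟨[], n.succ_pos⟩
    | some (j, w) => ⟨j :: w.1, Nat.succ_lt_succ w.2⟩
  left_inv v := by rcases v with ⟨_ | ⟨j, w⟩, h⟩ <;> rfl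
  right_inv o := by rcases o with _ | ⟨j, w⟩ <;> rfl

theorem tsum_lengthLt_succ {α E : Type*} [AddCommMonoid E] [TopologicalSpace E]
    (F : List α → E) (n : ℕ) (hF : {l | l.length < n + 1 ∧ F l ≠ 0}.Finite) :
    ∑' v : {l : List α // l.length < n + 1}, F v
      = F [] + ∑' j, ∑' w : {l : List α // l.length < n}, F (j :: w) := by
  have hsucc : HasFiniteSupport fun v : {l : List α // l.length < n + 1} => F v :=
    (hF.preimage Subtype.val_injective.injOn).subset fun v hv => ⟨v.2, hv⟩
  have hcons : HasFiniteSupport fun p : α × {l : List α // l.length < n} => F (p.1 :: p.2) :=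
    (hF.preimage (f := fun p : α × {l : List α // l.length < n} => p.1 :: p.2.1)
      fun p _ q _ h => by simpa [Prod.ext_iff, Subtype.ext_iff] using h).subset
      fun p hp => ⟨Nat.succ_lt_succ p.2.2, hp⟩
  have hfiber : ∀ j, HasFiniteSupport fun w : {l : List α // l.length < n} => F (j :: w) :=
    fun j => hcons.preimage (Prod.mk_right_injective j).injOn
  have hhead : HasFiniteSupport fun j => ∑' w : {l : List α // l.length < n}, F (j :: w) := by
    refine (hcons.image Prod.fst).subset fun j hj => ?_
    by_contra hnot
    refine hj ((tsum_congr fun w => ?_).trans tsum_zero)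
    by_contra hw
    exact hnot ⟨(j, w), hw, rfl⟩
  rw [tsum_eq_finsum hsucc, tsum_eq_finsum hhead,
    ← finsum_comp_equiv (List.lengthLtSuccEquiv α n).symm, finsum_option hcons]
  exact congrArg (F [] + ·) <|
    (finsum_curry _ hcons).trans (finsum_congr fun j => (tsum_eq_finsum (hfiber j)).symm)

theorem MeasureTheory.exists_seq_tendsto_ae_of_forall_tendstoInMeasure {α ι E : Type*}
    [MeasurableSpace α] {μ : Measure α} [Countable ι] [PseudoEMetricSpace E]
    {f : ι → ℕ → α → E} {g : ι → α → E}
    (hfg : ∀ i, TendstoInMeasure μ (f i) atTop (g i)) :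
    ∃ ns : ℕ → ℕ, ∀ᵐ x ∂μ, ∀ i, Tendsto (fun k => f i (ns k) x) atTop (𝓝 (g i x)) := by
  obtain ⟨e, he⟩ := Countable.exists_injective_nat ι
  have hpos : ∀ k : ℕ, 0 < (2⁻¹ : ℝ≥0∞) ^ k := fun k => ENNReal.pow_pos (by simp) k
  have hchoice : ∀ k, ∃ n, ∀ i, e i ≤ k →
      μ {x | 2⁻¹ ^ k ≤ edist (f i n x) (g i x)} ≤ 2⁻¹ ^ k := by
    intro k
    have hfin : {i | e i ≤ k}.Finite := (Set.finite_Iic k).preimage he.injOn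
    exact ((eventually_all_finite hfin).2 fun i _ =>
      (hfg i _ (hpos k)).eventually (eventually_le_nhds (hpos k))).exists
  choose ns hns using hchoice
  refine ⟨ns, ae_all_iff.2 fun i => ?_⟩
  -- Along `ns`, the bad events of the `i`-th sequence have measure `≤ 2⁻ᵏ` from index `e i` on.
  have hbad : ∀ᵐ x ∂μ, ∀ᶠ k in atTop,
      x ∉ {x | e i ≤ k ∧ 2⁻¹ ^ k ≤ edist (f i (ns k) x) (g i x)} := by
    refine ae_eventually_notMem (ne_top_of_le_ne_top (b := ∑' k : ℕ, (2⁻¹ : ℝ≥0∞) ^ k) ?_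
      (ENNReal.tsum_le_tsum fun k => ?_))
    · simp [ENNReal.tsum_geometric, ENNReal.one_sub_inv_two]
    · by_cases hk : e i ≤ k
      · exact (measure_mono fun x hx => hx.2).trans (hns k i hk)
      · simp [hk]
  filter_upwards [hbad] with x hx
  refine tendsto_iff_edist_tendsto_0.2 <| tendsto_of_tendsto_of_tendsto_of_le_of_le'
    tendsto_const_nhds (ENNReal.tendsto_pow_atTop_nhds_zero_of_lt_one (r := 2⁻¹) (by simp))
    (Eventually.of_forall fun _ => zero_le) ?_
  filter_upwards [hx, eventually_ge_atTop (e i)] with k hk hik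
  simp only [not_and, not_le] at hk
  exact (hk hik).le

section WeightedBranching

variable {Ω : Type*} (T : List ℕ → ℕ → Ω → ℝ) (ω : Ω)

theorem wbpWeight_nil : wbpWeight T [] ω = 1 := by
  simp [wbpWeight]

theorem wbpWeight_cons (j : ℕ) (w : List ℕ) :
    wbpWeight T (j :: w) ω = T [] j ω * wbpWeight (fun v k => T (j :: v) k) w ω := by
  rw [wbpWeight, List.length_cons, Finset.prod_range_succ', mul_comm]
  rfl

variable {T ω}

theorem finite_setOf_wbpWeight_ne_zero (hT : ∀ v, {j | T v j ω ≠ 0}.Finite) (n : ℕ) :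
    {l : List ℕ | l.length < n ∧ wbpWeight T l ω ≠ 0}.Finite := by
  induction n generalizing T with
  | zero => simp
  | succ n ih =>
    refine (((hT []).biUnion fun j _ =>
      (ih (T := fun v k => T (j :: v) k) fun v => hT (j :: v)).image (j :: ·)).insert []).subset ?_
    rintro (_ | ⟨j, w⟩) ⟨hlen, hne⟩
    · exact Set.mem_insert _ _
    · rw [wbpWeight_cons] at hne
      exact Set.mem_insert_of_mem _ <| Set.mem_biUnion (left_ne_zero_of_mul hne)
        ⟨w, ⟨Nat.lt_of_succ_lt_succ hlen, right_ne_zero_of_mul hne⟩, rfl⟩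

variable {E : Type*} [AddCommMonoid E] [Module ℝ E] [TopologicalSpace E]

noncomputable def wbpPartialSum (T : List ℕ → ℕ → Ω → ℝ) (C : List ℕ → Ω → E) (n : ℕ) (ω : Ω) :
    E :=
  ∑' v : {l : List ℕ // l.length < n}, wbpWeight T v.1 ω • C v.1 ω

theorem wbpPartialSum_succ [ContinuousConstSMul ℝ E] [T2Space E] (C : List ℕ → Ω → E)
    (hT : ∀ v, {j | T v j ω ≠ 0}.Finite) (n : ℕ) :
    wbpPartialSum T C (n + 1) ω = (∑' j : ℕ, T [] j ω •
      wbpPartialSum (fun w k => T (j :: w) k) (fun w => C (j :: w)) n ω) + C [] ω := by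
  have hF := (finite_setOf_wbpWeight_ne_zero hT (n + 1)).subset
    fun l (hl : l.length < n + 1 ∧ wbpWeight T l ω • C l ω ≠ 0) =>
      ⟨hl.1, fun h => hl.2 (by simp [h])⟩
  rw [wbpPartialSum, tsum_lengthLt_succ _ n hF, wbpWeight_nil, one_smul, add_comm]
  congr 1
  refine tsum_congr fun j => ?_
  simp only [wbpWeight_cons, mul_smul]
  exact tsum_const_smul'' _

end WeightedBranching

theorem Wstar_fixed_point_general {Ω : Type*} [MeasurableSpace Ω] (P : Measure Ω)
    (d : ℕ)
    (Tv : List ℕ → ℕ → Ω → ℝ) (Cv : List ℕ → Ω → Fin d → ℝ)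
    (hmeasT : ∀ v j, Measurable (Tv v j)) (hmeasC : ∀ v, Measurable (Cv v))
    (hident : ∀ v : List ℕ,
      Measure.map (fun ω => (Cv v ω, fun j => Tv v j ω)) P
        = Measure.map (fun ω => (Cv [] ω, fun j => Tv [] j ω)) P)
    (hN : ∀ᵐ ω ∂P, {j | Tv [] j ω ≠ 0}.Finite)
    (Wstar : Ω → Fin d → ℝ) (Wsub : ℕ → Ω → Fin d → ℝ)
    (hW : TendstoInMeasure P
      (fun n ω => ∑' v : {l : List ℕ // l.length < n}, wbpWeight Tv v.1 ω • Cv v.1 ω)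
      atTop Wstar)
    (hWsub : ∀ j : ℕ, TendstoInMeasure P
      (fun n ω => ∑' v : {l : List ℕ // l.length < n},
        wbpWeight (fun w k => Tv (j :: w) k) v.1 ω • Cv (j :: v.1) ω)
      atTop (Wsub j)) :
    ∀ᵐ ω ∂P, Wstar ω = (∑' j : ℕ, Tv [] j ω • Wsub j ω) + Cv [] ω := by
  have hfin : ∀ᵐ ω ∂P, ∀ v, {j | Tv v j ω ≠ 0}.Finite := by
    have hmeas : ∀ v, Measurable fun ω => (Cv v ω, fun j => Tv v j ω) := fun v =>
      (hmeasC v).prodMk (measurable_pi_lambda _ (hmeasT v))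
    exact ae_all_iff.2 fun v => IdentDistrib.ae_snd
      ⟨(hmeas []).aemeasurable, (hmeas v).aemeasurable, (hident v).symm⟩
      (measurable_snd measurableSet_setOf_finite_support) hN
  have hconv : ∀ i : Option ℕ, TendstoInMeasure P
      (fun n => i.elim (wbpPartialSum Tv Cv (n + 1))
        fun j => wbpPartialSum (fun w k => Tv (j :: w) k) (fun w => Cv (j :: w)) n)
      atTop (i.elim Wstar Wsub)
    | none => fun ε hε => (hW ε hε).comp (tendsto_add_atTop_nat 1)
    | some j => hWsub j
  obtain ⟨ns, hns⟩ := exists_seq_tendsto_ae_of_forall_tendstoInMeasure hconv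
  filter_upwards [hfin, hns] with ω hω hlim
  refine tendsto_nhds_unique (hlim none) ?_
  simp only [Option.elim, wbpPartialSum_succ _ hω]
  exact (tendsto_tsum_smul_of_finite (hω []) fun j => hlim (some j)).add_const _

/-- If `W*_n = ∑_{|v|<n} L(v)C(v)` converges in probability to `W*`, then almost surely
`W* = ∑_{j=1}^N T_j [W*]_j + C`, where `[W*]_j` is the analogous limit for the weighted
branching process rooted at the `j`-th child of the root; in particular the law of `W*`
is a fixed point of the inhomogeneous smoothing transform. -/
theorem Wstar_fixed_point {Ω : Type*} [MeasurableSpace Ω] (P : Measure Ω)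
    [IsProbabilityMeasure P] (d : ℕ)
    (Tv : List ℕ → ℕ → Ω → ℝ) (Cv : List ℕ → Ω → Fin d → ℝ)
    (hmeasT : ∀ v j, Measurable (Tv v j)) (hmeasC : ∀ v, Measurable (Cv v))
    (hindep : iIndepFun
      (m := fun _ : List ℕ => (inferInstance : MeasurableSpace ((Fin d → ℝ) × (ℕ → ℝ))))
      (fun v ω => (Cv v ω, fun j => Tv v j ω)) P)
    (hident : ∀ v : List ℕ,
      Measure.map (fun ω => (Cv v ω, fun j => Tv v j ω)) P
        = Measure.map (fun ω => (Cv [] ω, fun j => Tv [] j ω)) P)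
    (hN : ∀ᵐ ω ∂P, {j | Tv [] j ω ≠ 0}.Finite)
    (Wstar : Ω → Fin d → ℝ) (Wsub : ℕ → Ω → Fin d → ℝ)
    (hW : TendstoInMeasure P
      (fun n ω => ∑' v : {l : List ℕ // l.length < n}, wbpWeight Tv v.1 ω • Cv v.1 ω)
      atTop Wstar)
    (hWsub : ∀ j : ℕ, TendstoInMeasure P
      (fun n ω => ∑' v : {l : List ℕ // l.length < n},
        wbpWeight (fun w k => Tv (j :: w) k) v.1 ω • Cv (j :: v.1) ω)
      atTop (Wsub j)) :
    ∀ᵐ ω ∂P, Wstar ω = (∑' j : ℕ, Tv [] j ω • Wsub j ω) + Cv [] ω :=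
  Wstar_fixed_point_general P d Tv Cv hmeasT hmeasC hident hN Wstar Wsub hW hWsub
end

section
/- Assume $m(\beta) := \mathbb{E}[\sum_{j\ge1}|T_j|^{\beta}] < 1$ for some $0 < \beta \le 1$ and $\mathbb{E}[|C_j|^{\beta}] < \infty$ for $j = 1,\ldots,d$. Then the series $\sum_{v \in \mathbb{V}} |L(v)|\,|\mathbf{C}(v)|$ converges almost surely; in particular $\mathbf{W}_n^* = \sum_{|v|<n} L(v)\mathbf{C}(v)$ converges almost surely. -/
/-!
The factors of `L(v)` and `C(v)` sit at the distinct vertices of the path from the root to `v`, so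
they are independent and `E‖L(v) C(v)‖^β = ∏_k a(v_k) · E‖C‖^β` with `a j = E|T_j|^β`. Summing
over all words gives `E[∑_v ‖L(v) C(v)‖^β] = ∑_n m(β)^n · E‖C‖^β < ∞`. Hence almost surely the
family `L(v) C(v)` lies in `ℓ^β ⊆ ℓ^1`, and `W*_n` are its partial sums over the exhausting sets
`{|v| < n}`.
-/

open MeasureTheory ProbabilityTheory Filter

open scoped ENNReal Topology

lemma ENNReal.tsum_fin_pi_prod {α : Type*} (a : α → ℝ≥0∞) :
    ∀ n, ∑' t : Fin n → α, ∏ k, a (t k) = (∑' j, a j) ^ n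
  | 0 => by simp
  | n + 1 => by
    calc ∑' t : Fin (n + 1) → α, ∏ k, a (t k)
        = ∑' p : α × (Fin n → α), a p.1 * ∏ k, a (p.2 k) := by
          rw [← (Fin.consEquiv fun _ => α).tsum_eq]
          simp [Fin.consEquiv, Fin.prod_univ_succ]
      _ = (∑' j, a j) ^ (n + 1) := by
          rw [ENNReal.tsum_prod', pow_succ', ← tsum_fin_pi_prod a n, ← ENNReal.tsum_mul_right]
          simp_rw [ENNReal.tsum_mul_left]

lemma ENNReal.tsum_list_prod_map {α : Type*} (a : α → ℝ≥0∞) :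
    ∑' v : List α, (v.map a).prod = ∑' n : ℕ, (∑' j, a j) ^ n := by
  rw [← List.equivSigmaTuple.symm.tsum_eq, ENNReal.tsum_sigma']
  refine tsum_congr fun n => ?_
  simp [List.equivSigmaTuple, List.map_ofFn, List.prod_ofFn, ENNReal.tsum_fin_pi_prod]

lemma enorm_rpow_le_sum_enorm_rpow {ι E : Type*} [Fintype ι] [SeminormedAddCommGroup E]
    (x : ι → E) {β : ℝ} (hβ : 0 < β) : ‖x‖ₑ ^ β ≤ ∑ i, ‖x i‖ₑ ^ β := by
  rw [enorm_eq_nnnorm, Pi.nnnorm_def]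
  refine Finset.apply_sup_le_sum (f := fun r : NNReal => (r : ℝ≥0∞) ^ β)
    (by simp [ENNReal.zero_rpow_of_pos hβ]) (fun {s t} => ?_) _
  rcases le_total s t with h | h <;> simp [h]

lemma summable_norm_of_tsum_enorm_rpow_ne_top {ι E : Type*} [NormedAddCommGroup E] {f : ι → E}
    {β : ℝ} (hβ0 : 0 < β) (hβ1 : β ≤ 1) (hf : ∑' i, ‖f i‖ₑ ^ β ≠ ∞) :
    Summable fun i => ‖f i‖ := by
  have hβ : Memℓp f (ENNReal.ofReal β) := by
    rw [memℓp_gen_iff (by rwa [ENNReal.toReal_ofReal hβ0.le]), ENNReal.toReal_ofReal hβ0.le]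
    simp_rw [enorm_eq_nnnorm, ← ENNReal.coe_rpow_of_nonneg _ hβ0.le] at hf
    simpa using NNReal.summable_coe.mpr (ENNReal.tsum_coe_ne_top_iff_summable.mp hf)
  simpa using (memℓp_gen_iff (by simp)).mp (hβ.of_exponent_ge (ENNReal.ofReal_le_one.mpr hβ1))

lemma tendsto_tsum_subtype_of_summable_norm {ι G : Type*} [NormedAddCommGroup G] [CompleteSpace G]
    {f : ι → G} (hf : Summable fun i => ‖f i‖) {s : ℕ → Set ι}
    (hs : ∀ i, ∀ᶠ n in atTop, i ∈ s n) :
    Tendsto (fun n => ∑' i : s n, f i) atTop (𝓝 (∑' i, f i)) := by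
  simp_rw [tsum_subtype]
  refine tendsto_tsum_of_dominated_convergence hf (fun i => ?_)
    (Eventually.of_forall fun n i => norm_indicator_le_norm_self _ _)
  exact tendsto_const_nhds.congr' <| (hs i).mono fun n hn => (Set.indicator_of_mem hn f).symm

section WeightedBranchingProcess

variable {Ω : Type*} {d : ℕ} {Tv : List ℕ → ℕ → Ω → ℝ} {Cv : List ℕ → Ω → Fin d → ℝ} {β : ℝ}

lemma enorm_wbpWeight_smul_rpow (hβ : 0 ≤ β) (v : List ℕ) (ω : Ω) :
    ‖wbpWeight Tv v ω • Cv v ω‖ₑ ^ β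
      = (∏ k ∈ Finset.range v.length, ‖Tv (v.take k) (v.getD k 0) ω‖ₑ ^ β) * ‖Cv v ω‖ₑ ^ β := by
  rw [enorm_smul, ENNReal.mul_rpow_of_nonneg _ _ hβ, wbpWeight, enorm_eq_nnnorm, nnnorm_prod,
    ENNReal.ofNNReal_finsetProd, ← ENNReal.prod_rpow_of_nonneg hβ]
  rfl

variable [MeasurableSpace Ω] {P : Measure Ω}

lemma lintegral_comp_vertex_eq_root (hX : ∀ v, Measurable fun ω => (Cv v ω, fun j => Tv v j ω))
    (hident : ∀ v : List ℕ,
      Measure.map (fun ω => (Cv v ω, fun j => Tv v j ω)) P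
        = Measure.map (fun ω => (Cv [] ω, fun j => Tv [] j ω)) P)
    (v : List ℕ) {φ : (Fin d → ℝ) × (ℕ → ℝ) → ℝ≥0∞} (hφ : Measurable φ) :
    ∫⁻ ω, φ (Cv v ω, fun j => Tv v j ω) ∂P = ∫⁻ ω, φ (Cv [] ω, fun j => Tv [] j ω) ∂P :=
  (IdentDistrib.comp ⟨(hX v).aemeasurable, (hX []).aemeasurable, hident v⟩ hφ).lintegral_eq

lemma lintegral_enorm_wbpWeight_smul_rpow [IsProbabilityMeasure P] (hβ : 0 ≤ β)
    (hX : ∀ v, Measurable fun ω => (Cv v ω, fun j => Tv v j ω))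
    (hindep : iIndepFun (fun v ω => (Cv v ω, fun j => Tv v j ω)) P)
    (hident : ∀ v : List ℕ,
      Measure.map (fun ω => (Cv v ω, fun j => Tv v j ω)) P
        = Measure.map (fun ω => (Cv [] ω, fun j => Tv [] j ω)) P)
    (v : List ℕ) :
    ∫⁻ ω, ‖wbpWeight Tv v ω • Cv v ω‖ₑ ^ β ∂P
      = (v.map fun j => ∫⁻ ω, ‖Tv [] j ω‖ₑ ^ β ∂P).prod * ∫⁻ ω, ‖Cv [] ω‖ₑ ^ β ∂P := by
  let φ : Fin (v.length + 1) → (Fin d → ℝ) × (ℕ → ℝ) → ℝ≥0∞ := fun k p =>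
    if (k : ℕ) < v.length then ‖p.2 (v.getD k 0)‖ₑ ^ β else ‖p.1‖ₑ ^ β
  have hφ : ∀ k, Measurable (φ k) := fun k => by
    unfold φ; split_ifs <;> fun_prop
  have htake : Function.Injective fun k : Fin (v.length + 1) => v.take k := fun k l h => by
    have := congrArg List.length h
    simp only [List.length_take] at this
    omega
  have hsplit : ∀ ω, ‖wbpWeight Tv v ω • Cv v ω‖ₑ ^ β
      = ∏ k, φ k (Cv (v.take k) ω, fun j => Tv (v.take k) j ω) := fun ω => by
    simp [enorm_wbpWeight_smul_rpow hβ, Fin.prod_univ_castSucc, φ, ← Fin.prod_univ_eq_prod_range]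
  calc ∫⁻ ω, ‖wbpWeight Tv v ω • Cv v ω‖ₑ ^ β ∂P
      = ∫⁻ ω, ∏ k, φ k (Cv (v.take k) ω, fun j => Tv (v.take k) j ω) ∂P := by simp_rw [hsplit]
    _ = ∏ k, ∫⁻ ω, φ k (Cv (v.take k) ω, fun j => Tv (v.take k) j ω) ∂P :=
      lintegral_prod_eq_prod_lintegral_of_indepFun _ _ ((hindep.precomp htake).comp φ hφ)
        fun k => (hφ k).comp (hX _)
    _ = ∏ k, ∫⁻ ω, φ k (Cv [] ω, fun j => Tv [] j ω) ∂P :=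
      Finset.prod_congr rfl fun k _ => lintegral_comp_vertex_eq_root hX hident _ (hφ k)
    _ = _ := by
      simp [Fin.prod_univ_castSucc, φ,
        Fin.prod_univ_fun_getElem v fun j => ∫⁻ ω, ‖Tv [] j ω‖ₑ ^ β ∂P]

lemma measurable_enorm_wbpWeight_smul_rpow (hmeasT : ∀ v j, Measurable (Tv v j))
    (hmeasC : ∀ v, Measurable (Cv v)) (v : List ℕ) :
    Measurable fun ω => ‖wbpWeight Tv v ω • Cv v ω‖ₑ ^ β := by
  unfold wbpWeight
  fun_prop

lemma lintegral_tsum_enorm_wbpWeight_smul_rpow_lt_top [IsProbabilityMeasure P] (hβ : 0 ≤ β)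
    (hmeasT : ∀ v j, Measurable (Tv v j)) (hmeasC : ∀ v, Measurable (Cv v))
    (hindep : iIndepFun (fun v ω => (Cv v ω, fun j => Tv v j ω)) P)
    (hident : ∀ v : List ℕ,
      Measure.map (fun ω => (Cv v ω, fun j => Tv v j ω)) P
        = Measure.map (fun ω => (Cv [] ω, fun j => Tv [] j ω)) P)
    (hm : ∑' j, ∫⁻ ω, ‖Tv [] j ω‖ₑ ^ β ∂P < 1) (hc : ∫⁻ ω, ‖Cv [] ω‖ₑ ^ β ∂P < ∞) :
    ∫⁻ ω, ∑' v, ‖wbpWeight Tv v ω • Cv v ω‖ₑ ^ β ∂P < ∞ := by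
  have hX : ∀ v, Measurable fun ω => (Cv v ω, fun j => Tv v j ω) := fun v => by fun_prop
  rw [lintegral_tsum fun v => (measurable_enorm_wbpWeight_smul_rpow hmeasT hmeasC v).aemeasurable]
  simp_rw [lintegral_enorm_wbpWeight_smul_rpow hβ hX hindep hident]
  rw [ENNReal.tsum_mul_right, ENNReal.tsum_list_prod_map, ENNReal.tsum_geometric]
  exact ENNReal.mul_lt_top (ENNReal.inv_lt_top.mpr (tsub_pos_iff_lt.mpr hm)) hc

end WeightedBranchingProcess

theorem Wstar_converges_as_general {Ω : Type*} [MeasurableSpace Ω] (P : Measure Ω)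
    [IsProbabilityMeasure P] (d : ℕ)
    (Tv : List ℕ → ℕ → Ω → ℝ) (Cv : List ℕ → Ω → Fin d → ℝ)
    (hmeasT : ∀ v j, Measurable (Tv v j)) (hmeasC : ∀ v, Measurable (Cv v))
    (hindep : iIndepFun
      (fun v ω => (Cv v ω, fun j => Tv v j ω)) P)
    (hident : ∀ v : List ℕ,
      Measure.map (fun ω => (Cv v ω, fun j => Tv v j ω)) P
        = Measure.map (fun ω => (Cv [] ω, fun j => Tv [] j ω)) P)
    (β : ℝ) (hβ0 : 0 < β) (hβ1 : β ≤ 1)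
    (hmβ : ∫⁻ ω, ∑' j, (‖Tv [] j ω‖₊ : ENNReal) ^ β ∂P < 1)
    (hC : ∀ i : Fin d, ∫⁻ ω, (‖Cv [] ω i‖₊ : ENNReal) ^ β ∂P < ⊤) :
    (∀ᵐ ω ∂P, Summable (fun v : List ℕ => |wbpWeight Tv v ω| * ‖Cv v ω‖)) ∧
    ∃ Wstar : Ω → Fin d → ℝ, ∀ᵐ ω ∂P,
      Tendsto (fun n => ∑' v : {l : List ℕ // l.length < n}, wbpWeight Tv v.1 ω • Cv v.1 ω)
        atTop (nhds (Wstar ω)) := by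
  have hm : ∑' j, ∫⁻ ω, ‖Tv [] j ω‖ₑ ^ β ∂P < 1 := by
    rwa [← lintegral_tsum fun j => by fun_prop]
  have hc : ∫⁻ ω, ‖Cv [] ω‖ₑ ^ β ∂P < ∞ :=
    calc ∫⁻ ω, ‖Cv [] ω‖ₑ ^ β ∂P ≤ ∫⁻ ω, ∑ i, ‖Cv [] ω i‖ₑ ^ β ∂P :=
          lintegral_mono fun ω => enorm_rpow_le_sum_enorm_rpow _ hβ0
      _ = ∑ i, ∫⁻ ω, ‖Cv [] ω i‖ₑ ^ β ∂P := lintegral_finsetSum _ fun i _ => by fun_prop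
      _ < ∞ := ENNReal.sum_lt_top.mpr fun i _ => hC i
  have hsummable : ∀ᵐ ω ∂P, Summable fun v => ‖wbpWeight Tv v ω • Cv v ω‖ := by
    filter_upwards [ae_lt_top (Measurable.tsum
        (measurable_enorm_wbpWeight_smul_rpow hmeasT hmeasC))
      (lintegral_tsum_enorm_wbpWeight_smul_rpow_lt_top hβ0.le hmeasT hmeasC hindep hident hm
        hc).ne] with ω hω
    exact summable_norm_of_tsum_enorm_rpow_ne_top hβ0 hβ1 hω.ne
  refine ⟨hsummable.mono fun ω h => by simpa [norm_smul] using h,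
    fun ω => ∑' v, wbpWeight Tv v ω • Cv v ω, hsummable.mono fun ω h => ?_⟩
  exact tendsto_tsum_subtype_of_summable_norm h fun v => eventually_gt_atTop v.length

/-- Proposition 2.1(i): if `m(β) = E[∑_j |T_j|^β] < 1` for some `0 < β ≤ 1` and
`E[|C_i|^β] < ∞` for each coordinate `i`, then `∑_{v} |L(v)||C(v)|` converges a.s.;
in particular `W*_n = ∑_{|v|<n} L(v)C(v)` converges almost surely. -/
theorem Wstar_converges_as {Ω : Type*} [MeasurableSpace Ω] (P : Measure Ω)
    [IsProbabilityMeasure P] (d : ℕ)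
    (Tv : List ℕ → ℕ → Ω → ℝ) (Cv : List ℕ → Ω → Fin d → ℝ)
    (hmeasT : ∀ v j, Measurable (Tv v j)) (hmeasC : ∀ v, Measurable (Cv v))
    (hindep : iIndepFun
      (fun v ω => (Cv v ω, fun j => Tv v j ω)) P)
    (hident : ∀ v : List ℕ,
      Measure.map (fun ω => (Cv v ω, fun j => Tv v j ω)) P
        = Measure.map (fun ω => (Cv [] ω, fun j => Tv [] j ω)) P)
    (hN : ∀ᵐ ω ∂P, {j | Tv [] j ω ≠ 0}.Finite)
    (β : ℝ) (hβ0 : 0 < β) (hβ1 : β ≤ 1)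
    (hmβ : ∫⁻ ω, ∑' j, (‖Tv [] j ω‖₊ : ENNReal) ^ β ∂P < 1)
    (hC : ∀ i : Fin d, ∫⁻ ω, (‖Cv [] ω i‖₊ : ENNReal) ^ β ∂P < ⊤) :
    (∀ᵐ ω ∂P, Summable (fun v : List ℕ => |wbpWeight Tv v ω| * ‖Cv v ω‖)) ∧
    ∃ Wstar : Ω → Fin d → ℝ, ∀ᵐ ω ∂P,
      Tendsto (fun n => ∑' v : {l : List ℕ // l.length < n}, wbpWeight Tv v.1 ω • Cv v.1 ω)
        atTop (nhds (Wstar ω)) :=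
  Wstar_converges_as_general P d Tv Cv hmeasT hmeasC hindep hident β hβ0 hβ1 hmβ hC
end
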